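/- arXiv:2605.17572 — 4 statements merged into one kernel-verified Lean document; each statement's English description precedes it below -/
import Mathlib

section
/- Let G be a graph and h < |V(G)|. There exists an attack A with |A| ≤ h such that every defense D with |D| = 1 satisfies payoff(G,D,A) ≤ ⌈(|V(G)|−h)/2⌉ if and only if there exists a set X of at most h vertices such that every connected component of G − X has at most ⌈(|V(G)|−h)/2⌉ vertices. -/
open SimpleGraph

/-- A vertex `v` survives under defense `D` and attack `A` if `v ∉ A` and
the graph `G - A` contains a path from `v` to some vertex of `D`. -/
def survives {V : Type*} (G : SimpleGraph V) (D A : Finset V) (v : V) : Prop :=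
  ∃ (hv : v ∉ A) (d : V) (_ : d ∈ D) (hd : d ∉ A),
    (G.induce {x : V | x ∉ A}).Reachable ⟨v, hv⟩ ⟨d, hd⟩

/-- The number of surviving vertices. -/
noncomputable def payoff {V : Type*} (G : SimpleGraph V) (D A : Finset V) : ℕ :=
  Set.ncard {v : V | survives G D A v}

/-- The number of disabled (non-surviving) vertices. -/
noncomputable def payoffatt {V : Type*} (G : SimpleGraph V) (D A : Finset V) : ℕ :=
  Set.ncard {v : V | ¬ survives G D A v}

lemma surv_set_eq {V : Type*} (G : SimpleGraph V) (A : Finset V) (d : V) (hd : d ∉ A) :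
    {v : V | survives G {d} A v} =
      Subtype.val '' (((G.induce {x : V | x ∉ A}).connectedComponentMk ⟨d, hd⟩).supp) := by
  ext v
  simp only [Set.mem_setOf_eq, survives, Finset.mem_singleton, Set.mem_image,
    ConnectedComponent.mem_supp_iff]
  constructor
  · rintro ⟨hv, d', rfl, hd', hr⟩
    exact ⟨⟨v, hv⟩, ConnectedComponent.eq.2 hr, rfl⟩
  · rintro ⟨⟨w, hw⟩, hmk, rfl⟩
    exact ⟨hw, d, rfl, hd, ConnectedComponent.eq.1 hmk⟩

lemma payoff_single {V : Type*} (G : SimpleGraph V) (A : Finset V) (d : V) (hd : d ∉ A) :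
    payoff G {d} A =
      (((G.induce {x : V | x ∉ A}).connectedComponentMk ⟨d, hd⟩).supp).ncard := by
  rw [payoff, surv_set_eq G A d hd, Set.ncard_image_of_injective _ Subtype.val_injective]

open scoped Classical in
/-- Correctness of the reduction from BalancedVertexSeparator: an attack of size at
most `h` limiting every single-controller defense to payoff `⌈(n-h)/2⌉` exists iff
there is a balanced vertex separator of size at most `h`. -/
theorem stmt7 {V : Type*} [Fintype V] (G : SimpleGraph V) (h : ℕ)
    (hpos : 0 < h) (hh : h < Fintype.card V) :
    (∃ A : Finset V, A.card ≤ h ∧ ∀ D : Finset V, D.card = 1 →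
        payoff G D A ≤ (Fintype.card V - h + 1) / 2)
    ↔ (∃ X : Finset V, X.card ≤ h ∧
        ∀ c : (G.induce {x : V | x ∉ X}).ConnectedComponent,
          (c.supp).ncard ≤ (Fintype.card V - h + 1) / 2) := by
  constructor
  · rintro ⟨A, hA, hp⟩
    refine ⟨A, hA, fun c => ?_⟩
    obtain ⟨⟨d, hd⟩, rfl⟩ := c.exists_rep
    have hd' : d ∉ A := hd
    have he : (Quot.mk _ ⟨d, hd⟩ : (G.induce {x : V | x ∉ A}).ConnectedComponent)
        = (G.induce {x : V | x ∉ A}).connectedComponentMk ⟨d, hd'⟩ := rfl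
    rw [he, ← payoff_single G A d hd']
    exact hp {d} (Finset.card_singleton d)
  · rintro ⟨X, hX, hc⟩
    refine ⟨X, hX, fun D hD => ?_⟩
    obtain ⟨d, rfl⟩ := Finset.card_eq_one.1 hD
    by_cases hd : d ∈ X
    · have : {v : V | survives G {d} X v} = ∅ := by
        ext v
        simp only [Set.mem_setOf_eq, survives, Finset.mem_singleton, Set.mem_empty_iff_false,
          iff_false]
        rintro ⟨hv, d', rfl, hd', -⟩
        exact hd' hd
      rw [payoff, this, Set.ncard_empty]
      exact Nat.zero_le _
    · rw [payoff_single G X d hd]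
      exact hc _
end

section
/- Let G be a graph and let H be the graph whose vertex set is V(G) ∪ E(G), in which every two vertices of V(G) are adjacent, and each e = {u,v} ∈ E(G) is adjacent exactly to u and v. Let D = V(G) (all node vertices defended). If v₁,…,v_t are the vertices of a t-clique in G, then the attack A = {v₁,…,v_t} disables exactly t + C(t,2) vertices of H, provided t < |V(G)|. -/
open SimpleGraph

/-- The gadget graph on `V(G) ∪ E(G)`: node vertices form a clique, and each edge
vertex is adjacent exactly to its two endpoints. -/
def gadget {V : Type*} (G : SimpleGraph V) : SimpleGraph (V ⊕ G.edgeSet) where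
  Adj x y :=
    match x, y with
    | .inl u, .inl v => u ≠ v
    | .inl u, .inr e => u ∈ (e : Sym2 V)
    | .inr e, .inl u => u ∈ (e : Sym2 V)
    | .inr _, .inr _ => False
  symm := ⟨by
    rintro (u | e) (v | f) h <;> simp_all
    exact fun hvu => h hvu.symm⟩
  loopless := ⟨by rintro (u | e) h <;> simp_all⟩

section aux
open scoped Classical

variable {V : Type*} [Fintype V] {G : SimpleGraph V} {S : Finset V}

/-- If `x ≠ y` and `x` is reachable to `y`, then `x` has a neighbor. -/
lemma exists_adj_of_reachable {W : Type*} {H : SimpleGraph W} {x y : W}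
    (hxy : x ≠ y) (h : H.Reachable x y) : ∃ z, H.Adj x z := by
  obtain ⟨p⟩ := h
  cases p with
  | nil => exact absurd rfl hxy
  | cons ha _ => exact ⟨_, ha⟩

lemma surv_inl (v : V) :
    survives (gadget G) ((Finset.univ : Finset V).image Sum.inl)
      (S.image (Sum.inl : V → V ⊕ G.edgeSet)) (Sum.inl v) ↔ v ∉ S := by
  constructor
  · rintro ⟨hv, -⟩ hvS
    exact hv (Finset.mem_image.mpr ⟨v, hvS, rfl⟩)
  · intro hvS
    have hv : (Sum.inl v : V ⊕ G.edgeSet) ∉ S.image Sum.inl := by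
      simp [Finset.mem_image, hvS]
    exact ⟨hv, Sum.inl v, by simp, hv, Reachable.refl _⟩

lemma surv_inr (e : G.edgeSet) :
    survives (gadget G) ((Finset.univ : Finset V).image Sum.inl)
      (S.image (Sum.inl : V → V ⊕ G.edgeSet)) (Sum.inr e) ↔
      ∃ u ∈ (e : Sym2 V), u ∉ S := by
  have he : (Sum.inr e : V ⊕ G.edgeSet) ∉ S.image Sum.inl := by
    simp [Finset.mem_image]
  constructor
  · rintro ⟨he', d, hd, hdA, hr⟩
    obtain ⟨w, -, rfl⟩ := Finset.mem_image.mp hd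
    by_contra hc
    push_neg at hc
    have hne : (⟨Sum.inr e, he'⟩ : {x : V ⊕ G.edgeSet | x ∉ S.image Sum.inl}) ≠ ⟨Sum.inl w, hdA⟩ := by
      intro h
      exact nomatch (congrArg Subtype.val h)
    obtain ⟨⟨z, hz⟩, hadj⟩ := exists_adj_of_reachable hne hr
    simp only [comap_adj, Function.Embedding.coe_subtype] at hadj
    match z, hadj with
    | Sum.inl u, hadj =>
      exact hz (Finset.mem_image.mpr ⟨u, hc u hadj, rfl⟩)
  · rintro ⟨u, hu, huS⟩
    have hA : (Sum.inl u : V ⊕ G.edgeSet) ∉ S.image Sum.inl := by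
      simp [Finset.mem_image, huS]
    refine ⟨he, Sum.inl u, by simp, hA, ?_⟩
    exact (Adj.reachable (by exact hu : (gadget G).Adj (Sum.inr e) (Sum.inl u)))

omit [Fintype V] in
lemma map_val_mem_edgeSet (hS : G.IsClique (S : Set V)) (a : Sym2 {x // x ∈ S})
    (ha : ¬ a.IsDiag) : a.map Subtype.val ∈ G.edgeSet := by
  induction a using Sym2.ind with
  | _ u v =>
    rw [Sym2.mk_isDiag_iff] at ha
    simp only [Sym2.map_pair_eq, mem_edgeSet]
    exact hS u.2 v.2 (fun h => ha (Subtype.ext h))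

end aux

open scoped Classical in
/-- Attacking a `t`-clique of `G` in the gadget graph, with all node vertices
defended, disables exactly `t + C(t,2)` vertices. -/
theorem stmt8 {V : Type*} [Fintype V] (G : SimpleGraph V) (t : ℕ)
    (ht : t < Fintype.card V) (S : Finset V) (hS : G.IsNClique t S) :
    payoffatt (gadget G)
        ((Finset.univ : Finset V).image (Sum.inl : V → V ⊕ G.edgeSet))
        (S.image (Sum.inl : V → V ⊕ G.edgeSet))
      = t + t.choose 2 := by
  classical
  set B : Set G.edgeSet := {e | ∀ u ∈ (e : Sym2 V), u ∈ S} with hB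
  have hset : {x : V ⊕ G.edgeSet |
      ¬ survives (gadget G) ((Finset.univ : Finset V).image Sum.inl)
        (S.image Sum.inl) x}
      = (Sum.inl '' (S : Set V)) ∪ (Sum.inr '' B) := by
    ext x
    cases x with
    | inl v =>
      simp only [Set.mem_setOf_eq, surv_inl, not_not, Set.mem_union, Set.mem_image]
      constructor
      · intro h; exact Or.inl ⟨v, h, rfl⟩
      · rintro (⟨w, hw, h⟩ | ⟨e, _, h⟩)
        · cases h; exact hw
        · exact nomatch h
    | inr e =>
      simp only [Set.mem_setOf_eq, surv_inr, Set.mem_union, Set.mem_image]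
      push_neg
      constructor
      · intro h; exact Or.inr ⟨e, h, rfl⟩
      · rintro (⟨w, _, h⟩ | ⟨f, hf, h⟩)
        · exact nomatch h
        · cases h; exact hf
  have hfin : Finite (V ⊕ G.edgeSet) := by infer_instance
  have hdisj : Disjoint (Sum.inl '' (S : Set V)) ((Sum.inr '' B : Set (V ⊕ G.edgeSet))) := by
    rw [Set.disjoint_left]
    rintro x ⟨v, -, rfl⟩ ⟨e, -, h⟩
    exact nomatch h
  have h1 : (Sum.inl '' (S : Set V) : Set (V ⊕ G.edgeSet)).ncard = t := by
    rw [Set.ncard_image_of_injective _ Sum.inl_injective, Set.ncard_coe_finset, hS.2]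
  have h2 : ((Sum.inr '' B : Set (V ⊕ G.edgeSet))).ncard = t.choose 2 := by
    rw [Set.ncard_image_of_injective _ Sum.inr_injective]
    have : Nat.card B = t.choose 2 := by
      let f : {a : Sym2 {x // x ∈ S} // ¬ a.IsDiag} → B := fun a =>
        ⟨⟨a.1.map Subtype.val, map_val_mem_edgeSet hS.1 a.1 a.2⟩, by
          intro u hu
          obtain ⟨b, -, rfl⟩ := Sym2.mem_map.mp hu
          exact b.2⟩
      have hbij : Function.Bijective f := by
        constructor
        · intro a b hab
          apply Subtype.ext
          apply Sym2.map.injective Subtype.val_injective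
          exact congrArg (fun x : B => ((x : G.edgeSet) : Sym2 V)) hab
        · rintro ⟨⟨p, hp⟩, hmem⟩
          refine ⟨⟨p.attachWith hmem, ?_⟩, ?_⟩
          · intro h
            have hd : ((p.attachWith hmem).map Subtype.val).IsDiag :=
              (Sym2.isDiag_map Subtype.val_injective).mpr h
            rw [Sym2.attachWith_map_subtypeVal] at hd
            exact G.not_isDiag_of_mem_edgeSet hp hd
          · apply Subtype.ext; apply Subtype.ext
            exact Sym2.attachWith_map_subtypeVal hmem
      rw [← Nat.card_eq_of_bijective f hbij, Nat.card_eq_fintype_card,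
        Sym2.card_subtype_not_diag, Fintype.card_coe, hS.2]
    rw [← Nat.card_coe_set_eq, this]
  rw [payoffatt, hset, Set.ncard_union_eq hdisj (Set.toFinite _) (Set.toFinite _), h1, h2]
end

section
/- Knapsack decomposition over components: let G have connected components C₁,…,C_c, let D ⊆ V(G), and for each i and each 0 ≤ j ≤ ℓ let P(i,j) be the maximum of payoffatt over attacks of size at most j on the induced subgraph G[Cᵢ] with defense D ∩ Cᵢ. Then the maximum of payoffatt(G,D,A) over attacks A with |A| ≤ ℓ equals the maximum, over all ways to write ℓ₁ + ⋯ + ℓ_c ≤ ℓ with ℓᵢ ≥ 0, of Σᵢ P(i,ℓᵢ). -/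
open SimpleGraph

section Helpers
open scoped Classical

variable {V : Type*} [Fintype V] (G : SimpleGraph V)

noncomputable def Ares (c : G.ConnectedComponent) (A : Finset V) : Finset c.supp :=
  Finset.univ.filter (fun x => (x : V) ∈ A)

lemma mem_Ares {c : G.ConnectedComponent} {A : Finset V} {x : c.supp} :
    x ∈ Ares G c A ↔ (x : V) ∈ A := by simp [Ares]

-- reachability in induced subgraph implies reachability in G
lemma reach_of_induce {s : Set V} {a b : s} (h : (G.induce s).Reachable a b) :
    G.Reachable a b := by
  exact h.map ⟨Subtype.val, fun h => h⟩

lemma reach_lift (A : Finset V) (c : G.ConnectedComponent)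
    {a b : {x : V | x ∉ A}} (w : (G.induce {x : V | x ∉ A}).Walk a b) :
    ∀ (ha : (a : V) ∈ c.supp) (hb : (b : V) ∈ c.supp),
      ((G.induce c.supp).induce {y : c.supp | y ∉ Ares G c A}).Reachable
        ⟨⟨a, ha⟩, by simpa only [Set.mem_setOf_eq, mem_Ares] using a.2⟩ ⟨⟨b, hb⟩, by simpa only [Set.mem_setOf_eq, mem_Ares] using b.2⟩ := by
  induction w with
  | nil => intro ha hb; exact Reachable.refl _
  | @cons u m b h w ih =>
    intro ha hb
    have hadj : G.Adj (u : V) (m : V) := h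
    have hm : (m : V) ∈ c.supp := by
      rw [ConnectedComponent.mem_supp_iff] at ha ⊢
      exact (ConnectedComponent.sound hadj.reachable.symm).trans ha
    have hstep : ((G.induce c.supp).induce {y : c.supp | y ∉ Ares G c A}).Adj
        ⟨⟨u, ha⟩, by simpa only [Set.mem_setOf_eq, mem_Ares] using u.2⟩ ⟨⟨m, hm⟩, by simpa only [Set.mem_setOf_eq, mem_Ares] using m.2⟩ := hadj
    exact hstep.reachable.trans (ih hm hb)

lemma surv_iff (D A : Finset V) (c : G.ConnectedComponent) (x : c.supp) :
    survives (G.induce c.supp) (Finset.univ.filter (fun x : c.supp => (x : V) ∈ D))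
      (Ares G c A) x ↔ survives G D A (x : V) := by
  constructor
  · rintro ⟨hx, d, hdD, hdA, hreach⟩
    refine ⟨by simpa [mem_Ares] using hx, (d : V), by simpa using hdD,
      by simpa [mem_Ares] using hdA, ?_⟩
    exact Reachable.map
      (⟨fun r => ⟨((r : c.supp) : V), fun h => r.2 ((mem_Ares G).mpr h)⟩, fun h => h⟩ :
        ((G.induce c.supp).induce {y : c.supp | y ∉ Ares G c A}) →g
          (G.induce {x : V | x ∉ A})) hreach
  · rintro ⟨hx, d, hdD, hdA, hreach⟩
    have hds : d ∈ c.supp := by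
      rw [ConnectedComponent.mem_supp_iff]
      have hr : G.Reachable (x : V) d := reach_of_induce G hreach
      exact (ConnectedComponent.sound hr.symm).trans
        (ConnectedComponent.mem_supp_iff _ _ |>.mp x.2)
    obtain ⟨w⟩ := hreach
    have := reach_lift G A c w x.2 hds
    exact ⟨by simpa [mem_Ares] using hx, ⟨d, hds⟩, by simpa using hdD,
      by simpa [mem_Ares] using hdA, this⟩

lemma card_Ares (A : Finset V) (c : G.ConnectedComponent) :
    (Ares G c A).card = (A.filter (fun v => G.connectedComponentMk v = c)).card := by
  refine Finset.card_bij (fun x _ => (x : V)) ?_ ?_ ?_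
  · intro x hx
    simp only [Finset.mem_filter]
    exact ⟨mem_Ares G |>.mp hx, ConnectedComponent.mem_supp_iff _ _ |>.mp x.2⟩
  · intro a _ b _ hab; exact Subtype.ext hab
  · intro v hv
    simp only [Finset.mem_filter] at hv
    exact ⟨⟨v, (ConnectedComponent.mem_supp_iff _ _).mpr hv.2⟩, (mem_Ares G).mpr hv.1, rfl⟩

lemma sum_card_Ares (A : Finset V) :
    ∑ c : G.ConnectedComponent, (Ares G c A).card = A.card := by
  rw [Finset.card_eq_sum_card_fiberwise (f := G.connectedComponentMk)
    (t := Finset.univ) (fun v _ => Finset.mem_univ _)]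
  exact Finset.sum_congr rfl fun c _ => card_Ares G A c

lemma payoffatt_decomp (D A : Finset V) :
    payoffatt G D A = ∑ c : G.ConnectedComponent,
      payoffatt (G.induce c.supp)
        (Finset.univ.filter (fun x : c.supp => (x : V) ∈ D)) (Ares G c A) := by
  have hcount : ∀ c : G.ConnectedComponent,
      payoffatt (G.induce c.supp)
        (Finset.univ.filter (fun x : c.supp => (x : V) ∈ D)) (Ares G c A)
      = ((Set.toFinset {v : V | ¬ survives G D A v}).filter
          (fun v => G.connectedComponentMk v = c)).card := by
    intro c
    rw [payoffatt, Set.ncard_eq_toFinset_card']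
    refine Finset.card_bij (fun x _ => (x : V)) ?_ ?_ ?_
    · intro x hx
      simp only [Set.mem_toFinset, Set.mem_setOf_eq] at hx
      simp only [Finset.mem_filter, Set.mem_toFinset, Set.mem_setOf_eq]
      exact ⟨fun h => hx ((surv_iff G D A c x).mpr h),
        ConnectedComponent.mem_supp_iff _ _ |>.mp x.2⟩
    · intro a _ b _ hab; exact Subtype.ext hab
    · intro v hv
      simp only [Finset.mem_filter, Set.mem_toFinset, Set.mem_setOf_eq] at hv
      refine ⟨⟨v, (ConnectedComponent.mem_supp_iff _ _).mpr hv.2⟩, ?_, rfl⟩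
      simp only [Set.mem_toFinset, Set.mem_setOf_eq]
      exact fun h => hv.1 ((surv_iff G D A c _).mp h)
  rw [payoffatt, Set.ncard_eq_toFinset_card']
  rw [Finset.card_eq_sum_card_fiberwise (f := G.connectedComponentMk)
    (t := Finset.univ) (fun v _ => Finset.mem_univ _)]
  exact Finset.sum_congr rfl fun c _ => (hcount c).symm

end Helpers

open scoped Classical in
/-- Knapsack decomposition of the attacker's optimum over connected components. -/
theorem stmt13 {V : Type*} [Fintype V] (G : SimpleGraph V) (D : Finset V) (ℓ : ℕ) :
    ((Finset.univ : Finset (Finset V)).filter (fun A => A.card ≤ ℓ)).sup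
        (fun A => payoffatt G D A)
      = ((Finset.univ : Finset (G.ConnectedComponent → Fin (ℓ + 1))).filter
            (fun f => ∑ c, (f c : ℕ) ≤ ℓ)).sup
          (fun f => ∑ c : G.ConnectedComponent,
            ((Finset.univ : Finset (Finset c.supp)).filter
                (fun A' => A'.card ≤ (f c : ℕ))).sup
              (fun A' => payoffatt (G.induce c.supp)
                (Finset.univ.filter (fun x : c.supp => (x : V) ∈ D)) A')) := by
  apply le_antisymm
  · apply Finset.sup_le
    intro A hA
    rw [Finset.mem_filter] at hA
    have hsum : ∑ c : G.ConnectedComponent, (Ares G c A).card = A.card :=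
      sum_card_Ares G A
    have hle : ∀ c, (Ares G c A).card ≤ ℓ := by
      intro c
      refine le_trans ?_ hA.2
      rw [← hsum]
      exact Finset.single_le_sum (f := fun c => (Ares G c A).card)
        (fun i _ => Nat.zero_le _) (Finset.mem_univ c)
    set f : G.ConnectedComponent → Fin (ℓ + 1) :=
      fun c => ⟨(Ares G c A).card, Nat.lt_succ_of_le (hle c)⟩ with hf
    have hfmem : f ∈ (Finset.univ : Finset (G.ConnectedComponent → Fin (ℓ + 1))).filter
        (fun f => ∑ c, (f c : ℕ) ≤ ℓ) := by
      simp only [Finset.mem_filter, Finset.mem_univ, true_and, hf]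
      simpa [hsum] using hA.2
    refine le_trans ?_ (Finset.le_sup hfmem)
    rw [payoffatt_decomp G D A]
    refine Finset.sum_le_sum fun c _ => ?_
    refine Finset.le_sup (f := fun A' => payoffatt (G.induce c.supp)
      (Finset.univ.filter (fun x : c.supp => (x : V) ∈ D)) A') ?_
    simp [hf]
  · apply Finset.sup_le
    intro f hf
    rw [Finset.mem_filter] at hf
    have hex : ∀ c : G.ConnectedComponent, ∃ B : Finset c.supp,
        B.card ≤ (f c : ℕ) ∧
        ((Finset.univ : Finset (Finset c.supp)).filter
            (fun A' => A'.card ≤ (f c : ℕ))).sup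
          (fun A' => payoffatt (G.induce c.supp)
            (Finset.univ.filter (fun x : c.supp => (x : V) ∈ D)) A')
          = payoffatt (G.induce c.supp)
            (Finset.univ.filter (fun x : c.supp => (x : V) ∈ D)) B := by
      intro c
      have hne : ((Finset.univ : Finset (Finset c.supp)).filter
          (fun A' => A'.card ≤ (f c : ℕ))).Nonempty := ⟨∅, by simp⟩
      obtain ⟨B, hB, hBeq⟩ := Finset.exists_mem_eq_sup _ hne
        (fun A' => payoffatt (G.induce c.supp)
          (Finset.univ.filter (fun x : c.supp => (x : V) ∈ D)) A')
      exact ⟨B, (Finset.mem_filter.mp hB).2, hBeq⟩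
    choose g hgcard hgeq using hex
    set A : Finset V := Finset.univ.biUnion
      (fun c : G.ConnectedComponent => (g c).image Subtype.val) with hAdef
    have hAres : ∀ c, Ares G c A = g c := by
      intro c
      ext x
      rw [mem_Ares]
      simp only [hAdef, Finset.mem_biUnion, Finset.mem_univ, true_and,
        Finset.mem_image]
      constructor
      · rintro ⟨c', y, hy, hxy⟩
        have hc' : c' = c := by
          have h1 := (ConnectedComponent.mem_supp_iff _ _).mp y.2
          have h2 := (ConnectedComponent.mem_supp_iff _ _).mp x.2
          rw [← h1, ← h2, hxy]
        subst hc'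
        rwa [Subtype.ext hxy] at hy
      · intro hx
        exact ⟨c, x, hx, rfl⟩
    have hAcard : A.card ≤ ℓ := by
      refine le_trans Finset.card_biUnion_le (le_trans ?_ hf.2)
      refine Finset.sum_le_sum fun c _ => ?_
      rw [Finset.card_image_of_injective _ Subtype.val_injective]
      exact hgcard c
    have hAmem : A ∈ (Finset.univ : Finset (Finset V)).filter
        (fun A => A.card ≤ ℓ) := by
      simp only [Finset.mem_filter, Finset.mem_univ, true_and]
      exact hAcard
    calc (∑ c : G.ConnectedComponent,
          ((Finset.univ : Finset (Finset c.supp)).filter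
              (fun A' => A'.card ≤ (f c : ℕ))).sup
            (fun A' => payoffatt (G.induce c.supp)
              (Finset.univ.filter (fun x : c.supp => (x : V) ∈ D)) A'))
        = ∑ c : G.ConnectedComponent, payoffatt (G.induce c.supp)
            (Finset.univ.filter (fun x : c.supp => (x : V) ∈ D)) (Ares G c A) := by
          refine Finset.sum_congr rfl fun c _ => ?_
          rw [hgeq c, hAres c]
      _ = payoffatt G D A := (payoffatt_decomp G D A).symm
      _ ≤ _ := Finset.le_sup hAmem
end

section
/- Let X be a finite nonempty set, S₁,…,S_m ⊆ X a family covering X, and G = K_m with vertex set {1,…,m}. For each x ∈ X let A_x = {i : x ∉ Sᵢ} and consider the mixed attack that plays each A_x with probability 1/|X|. Then for a defense D ⊆ {1,…,m}, the expected payoff Σ_{x ∈ X} payoff(K_m, D, A_x)/|X| equals Σ_{x ∈ X} (m − |A_x|)/|X| if and only if for every x ∈ X there exists i ∈ D with x ∈ Sᵢ (i.e., {Sᵢ : i ∈ D} covers X). -/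
open SimpleGraph

lemma survives_top_iff {V : Type*} [DecidableEq V] (D A : Finset V) (v : V) :
    survives (⊤ : SimpleGraph V) D A v ↔ v ∉ A ∧ ∃ d ∈ D, d ∉ A := by
  constructor
  · rintro ⟨hv, d, hdD, hd, -⟩
    exact ⟨hv, d, hdD, hd⟩
  · rintro ⟨hv, d, hdD, hd⟩
    refine ⟨hv, d, hdD, hd, ?_⟩
    by_cases h : v = d
    · subst h; rfl
    · exact SimpleGraph.Adj.reachable (by simpa using h)

lemma payoff_top_pos {V : Type*} [Fintype V] [DecidableEq V] (D A : Finset V)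
    (h : ∃ d ∈ D, d ∉ A) :
    payoff (⊤ : SimpleGraph V) D A = Fintype.card V - A.card := by
  have : {v : V | survives (⊤ : SimpleGraph V) D A v} = ↑(Aᶜ) := by
    ext v; simp [survives_top_iff, h]
  rw [payoff, this, Set.ncard_coe_finset, Finset.card_compl]

lemma payoff_top_zero {V : Type*} [Fintype V] [DecidableEq V] (D A : Finset V)
    (h : ¬ ∃ d ∈ D, d ∉ A) :
    payoff (⊤ : SimpleGraph V) D A = 0 := by
  have : {v : V | survives (⊤ : SimpleGraph V) D A v} = ∅ := by
    ext v; simp [survives_top_iff, h]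
  rw [payoff, this, Set.ncard_empty]


/-- Correctness of the SetCover reduction for CP(Fixed Mixed Attack, Pure Defense):
in `K_m`, under the uniform mixed attack `{A_x}_{x ∈ X}` with `A_x = {i : x ∉ Sᵢ}`,
a defense `D` achieves expected payoff `Σ (m - |A_x|)/|X|` iff `{Sᵢ : i ∈ D}`
covers `X`. -/
theorem stmt14 {X : Type*} [Fintype X] [Nonempty X] [DecidableEq X]
    (m : ℕ) (S : Fin m → Finset X) (hcover : ∀ x : X, ∃ i, x ∈ S i)
    (D : Finset (Fin m)) :
    (∑ x : X, (payoff (⊤ : SimpleGraph (Fin m)) D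
        (Finset.univ.filter (fun i => x ∉ S i)) : ℚ)) / (Fintype.card X : ℚ)
      = (∑ x : X, ((m : ℚ) - ((Finset.univ.filter (fun i => x ∉ S i)) :
            Finset (Fin m)).card)) / (Fintype.card X : ℚ)
    ↔ ∀ x : X, ∃ i ∈ D, x ∈ S i := by
  set A : X → Finset (Fin m) := fun x => Finset.univ.filter (fun i => x ∉ S i) with hA
  have hcardX : (Fintype.card X : ℚ) ≠ 0 := by
    exact_mod_cast Fintype.card_ne_zero
  -- A x is a proper subset: (A x).card < m
  have hlt : ∀ x, (A x).card < m := by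
    intro x
    obtain ⟨i, hi⟩ := hcover x
    have : A x ⊂ Finset.univ := by
      refine Finset.ssubset_univ_iff.mpr ?_
      intro h
      have : i ∈ A x := h ▸ Finset.mem_univ i
      simp [hA, hi] at this
    simpa using Finset.card_lt_card this
  have hpos : ∀ x, (0:ℚ) < (m : ℚ) - (A x).card := by
    intro x
    have := hlt x
    have : ((A x).card : ℚ) < m := by exact_mod_cast this
    linarith
  have hle : ∀ x ∈ Finset.univ, (payoff (⊤ : SimpleGraph (Fin m)) D (A x) : ℚ)
      ≤ (m : ℚ) - (A x).card := by
    intro x _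
    by_cases h : ∃ d ∈ D, d ∉ A x
    · rw [payoff_top_pos D (A x) h]
      rw [Nat.cast_sub (le_of_lt (by simpa using hlt x))]
      simp
    · rw [payoff_top_zero D (A x) h]
      exact le_of_lt (by exact_mod_cast hpos x)
  rw [div_eq_div_iff hcardX hcardX, (mul_left_injective₀ hcardX).eq_iff,
    Finset.sum_eq_sum_iff_of_le hle]
  constructor
  · intro h x
    have hx := h x (Finset.mem_univ x)
    by_contra hc
    have h0 : ¬ ∃ d ∈ D, d ∉ A x := by
      rintro ⟨d, hdD, hd⟩
      exact hc ⟨d, hdD, by simpa [hA] using hd⟩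
    rw [payoff_top_zero D (A x) h0] at hx
    have := hpos x
    simp only [Nat.cast_zero] at hx
    linarith [hx]
  · intro h x _
    obtain ⟨i, hiD, hi⟩ := h x
    have h0 : ∃ d ∈ D, d ∉ A x := ⟨i, hiD, by simp [hA, hi]⟩
    rw [payoff_top_pos D (A x) h0,
      Nat.cast_sub (le_of_lt (by simpa using hlt x))]
    simp
end
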